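/- Let K ≥ 1 be an integer, let π_1,…,π_K ≥ 0 with ∑_{i=1}^K π_i = 1 and π_i = π_{K+1−i} for all 1 ≤ i ≤ K, and let λ > 0, μ > 0. For 1 ≤ i, j ≤ K write Φ(i,j) := ∫∫ φ(x − y) d(Gamma(i,λ))(x) d(Gamma(j,μ))(y). Then for every convex function φ : ℝ → ℝ such that (x,y) ↦ φ(x−y) is integrable with respect to Gamma(i,λ) ⊗ Gamma(j,μ) for all 1 ≤ i, j ≤ K: ∑_{i=1}^K ∑_{j=1}^K π_i π_j Φ(i,j) ≤ ∑_{i=1}^K π_i Φ(i, K+1−i). -/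

import Mathlib

/-!
Write `Φ(i, j) = 𝔼 φ(X_i - Y_j)` with independent `X_i ∼ Gamma(i, λ)`, `Y_j ∼ Gamma(j, μ)`.
Since `Gamma(i + 1, λ) = Gamma(i, λ) ∗ Exp(λ)`, one may realise `X_{i+1} = X_i + U`,
`Y_{j+1} = Y_j + V` with `U, V ≥ 0`, and the increments of a convex function are nondecreasing:
`φ(x - y) + φ(x + u - y - v) ≤ φ(x - y - v) + φ(x + u - y)`. Hence `Φ` is submodular on the grid,
`Φ(i, m) + Φ(j, n) ≤ Φ(i, n) + Φ(j, m)` for `i ≤ j`, `m ≤ n`. The reflection `σ i = K + 1 - i`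
reverses the order and preserves `π`, so `Φ(i, σ j) + Φ(j, σ i) ≤ Φ(i, σ i) + Φ(j, σ j)`;
averaging over `π ⊗ π` after the substitution `j ↦ σ j` gives the claim.
-/

open MeasureTheory ProbabilityTheory Set Real

theorem ConvexOn.map_add_sub_map_le {φ : ℝ → ℝ} (hφ : ConvexOn ℝ univ φ) {a b e : ℝ}
    (hab : a ≤ b) (he : 0 ≤ e) : φ (a + e) - φ a ≤ φ (b + e) - φ b := by
  rcases he.eq_or_lt with rfl | he
  · simp
  have hleft : slope φ a (a + e) ≤ slope φ a (b + e) :=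
    hφ.slope_mono (mem_univ a) ⟨mem_univ _, by simpa using he.ne'⟩
      ⟨mem_univ _, by rw [mem_singleton_iff]; linarith⟩ (by linarith)
  have hright : slope φ (b + e) a ≤ slope φ (b + e) b :=
    hφ.slope_mono (mem_univ _) ⟨mem_univ a, by rw [mem_singleton_iff]; linarith⟩
      ⟨mem_univ b, by simpa using he.ne'⟩ hab
  rw [slope_comm φ (b + e) a] at hright
  have h := (hleft.trans hright).trans_eq (slope_comm φ (b + e) b)
  rw [slope_def_field, slope_def_field, add_sub_cancel_left, add_sub_cancel_left,
    div_le_div_iff_of_pos_right he] at h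
  linarith

theorem gammaPDF_lconvolution_gammaPDF_one {a r : ℝ} (ha : 0 < a) (hr : 0 < r) :
    gammaPDF a r ⋆ₗ gammaPDF 1 r = gammaPDF (a + 1) r := by
  ext z
  set C := r ^ a * r / Gamma a * exp (-(r * z)) with hC
  have hae : (fun y => gammaPDF a r y * gammaPDF 1 r (-y + z))
      =ᵐ[volume] (Ioo 0 z).indicator fun y => ENNReal.ofReal (C * y ^ (a - 1)) := by
    filter_upwards [volume.ae_ne 0, volume.ae_ne z] with y hy0 hyz
    by_cases hy : y ∈ Ioo 0 z
    · rw [indicator_of_mem hy]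
      obtain ⟨hy0, hyz⟩ := hy
      rw [gammaPDF_of_nonneg hy0.le, gammaPDF_of_nonneg (by linarith),
        ← ENNReal.ofReal_mul (by positivity)]
      congr 1
      rw [hC, Gamma_one, sub_self, rpow_zero, rpow_one, div_one, mul_one]
      have hexp : exp (-(r * y)) * exp (-(r * (-y + z))) = exp (-(r * z)) := by
        rw [← exp_add]; ring_nf
      rw [← hexp]; ring
    · rw [indicator_of_notMem hy]
      rcases not_and_or.mp hy with hy | hy
      · rw [gammaPDF_of_neg (lt_of_le_of_ne (not_lt.mp hy) hy0), zero_mul]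
      · rw [gammaPDF_of_neg (x := -y + z)
          (by linarith [lt_of_le_of_ne (not_lt.mp hy) hyz.symm]), mul_zero]
  rw [lconvolution_def, lintegral_congr_ae hae, lintegral_indicator measurableSet_Ioo]
  rcases le_or_gt z 0 with hz | hz
  · rw [Ioo_eq_empty (not_lt.mpr hz), Measure.restrict_empty, lintegral_zero_measure]
    rcases hz.lt_or_eq with hz | rfl
    · rw [gammaPDF_of_neg hz]
    · simp [gammaPDF_of_nonneg, zero_rpow ha.ne']
  have hint : IntegrableOn (fun y : ℝ => y ^ (a - 1)) (Ioo 0 z) :=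
    (intervalIntegral.intervalIntegrable_rpow' (by linarith)).1.mono_set Ioo_subset_Ioc_self
  have hpow : ∫ y in Ioo 0 z, y ^ (a - 1) = z ^ a / a := by
    rw [← integral_Ioc_eq_integral_Ioo, ← intervalIntegral.integral_of_le hz.le,
      integral_rpow (Or.inl (by linarith)), sub_add_cancel, zero_rpow ha.ne', sub_zero]
  simp_rw [ENNReal.ofReal_mul (by positivity : 0 ≤ C)]
  rw [lintegral_const_mul' _ _ ENNReal.ofReal_ne_top, ← ofReal_integral_eq_lintegral_ofReal hint
    ((ae_restrict_iff' measurableSet_Ioo).mpr (ae_of_all _ fun y hy => rpow_nonneg hy.1.le _)),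
    hpow, ← ENNReal.ofReal_mul (by positivity), gammaPDF_of_nonneg hz.le, add_sub_cancel_right,
    Gamma_add_one ha.ne', rpow_add_one hr.ne', hC]
  congr 1
  field_simp

theorem gammaMeasure_conv_gammaMeasure_one {a r : ℝ} (ha : 0 < a) (hr : 0 < r) :
    gammaMeasure a r ∗ gammaMeasure 1 r = gammaMeasure (a + 1) r := by
  rw [gammaMeasure, gammaMeasure, conv_withDensity_eq_lconvolution
    (f := gammaPDF a r) (g := gammaPDF 1 r) (measurable_gammaPDFReal a r).ennreal_ofReal
    (measurable_gammaPDFReal 1 r).ennreal_ofReal,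
    gammaPDF_lconvolution_gammaPDF_one ha hr, gammaMeasure]

theorem ae_nonneg_gammaMeasure (a r : ℝ) : ∀ᵐ x ∂gammaMeasure a r, 0 ≤ x :=
  (ae_withDensity_iff (measurable_gammaPDFReal a r).ennreal_ofReal).2 <|
    ae_of_all _ fun _ hx => not_lt.mp fun hneg => hx (gammaPDF_of_neg hneg)

noncomputable def integralCompSub (φ : ℝ → ℝ) (μ ν : Measure ℝ) : ℝ :=
  ∫ p : ℝ × ℝ, φ (p.1 - p.2) ∂(μ.prod ν)

def IntegrableCompSub (φ : ℝ → ℝ) (μ ν : Measure ℝ) : Prop :=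
  Integrable (fun p : ℝ × ℝ => φ (p.1 - p.2)) (μ.prod ν)

section CompSub

variable {φ : ℝ → ℝ} {α β : Type*} [MeasurableSpace α] [MeasurableSpace β]
  {P : Measure α} {Q : Measure β} [SFinite P] [SFinite Q] {f : α → ℝ} {g : β → ℝ}

theorem integralCompSub_map_map (hφ : Measurable φ) (hf : Measurable f) (hg : Measurable g) :
    integralCompSub φ (P.map f) (Q.map g) = ∫ q, φ (f q.1 - g q.2) ∂(P.prod Q) := by
  have hφ' : Measurable fun p : ℝ × ℝ => φ (p.1 - p.2) := by fun_prop
  rw [integralCompSub, Measure.map_prod_map P Q hf hg,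
    integral_map (hf.prodMap hg).aemeasurable hφ'.aestronglyMeasurable]
  rfl

theorem integrableCompSub_map_map_iff (hφ : Measurable φ) (hf : Measurable f)
    (hg : Measurable g) :
    IntegrableCompSub φ (P.map f) (Q.map g) ↔
      Integrable (fun q => φ (f q.1 - g q.2)) (P.prod Q) := by
  have hφ' : Measurable fun p : ℝ × ℝ => φ (p.1 - p.2) := by fun_prop
  rw [IntegrableCompSub, Measure.map_prod_map P Q hf hg,
    integrable_map_measure hφ'.aestronglyMeasurable (hf.prodMap hg).aemeasurable]
  rfl

end CompSub

section Submodular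

variable {φ : ℝ → ℝ}

theorem integralCompSub_map_submodular (hφ : ConvexOn ℝ univ φ) {P Q : Measure (ℝ × ℝ)}
    [SFinite P] [SFinite Q] (hP : ∀ᵐ x ∂P, 0 ≤ x.2) (hQ : ∀ᵐ y ∂Q, 0 ≤ y.2)
    (h₀₀ : IntegrableCompSub φ (P.map Prod.fst) (Q.map Prod.fst))
    (h₀₁ : IntegrableCompSub φ (P.map Prod.fst) (Q.map fun y => y.1 + y.2))
    (h₁₀ : IntegrableCompSub φ (P.map fun x => x.1 + x.2) (Q.map Prod.fst))
    (h₁₁ : IntegrableCompSub φ (P.map fun x => x.1 + x.2) (Q.map fun y => y.1 + y.2)) :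
    integralCompSub φ (P.map Prod.fst) (Q.map Prod.fst) +
        integralCompSub φ (P.map fun x => x.1 + x.2) (Q.map fun y => y.1 + y.2) ≤
      integralCompSub φ (P.map Prod.fst) (Q.map fun y => y.1 + y.2) +
        integralCompSub φ (P.map fun x => x.1 + x.2) (Q.map Prod.fst) := by
  have hφm : Measurable φ := (continuousOn_univ.mp (hφ.continuousOn isOpen_univ)).measurable
  have hadd : Measurable fun x : ℝ × ℝ => x.1 + x.2 := measurable_add
  rw [integrableCompSub_map_map_iff hφm measurable_fst measurable_fst] at h₀₀
  rw [integrableCompSub_map_map_iff hφm measurable_fst hadd] at h₀₁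
  rw [integrableCompSub_map_map_iff hφm hadd measurable_fst] at h₁₀
  rw [integrableCompSub_map_map_iff hφm hadd hadd] at h₁₁
  rw [integralCompSub_map_map hφm measurable_fst measurable_fst,
    integralCompSub_map_map hφm hadd hadd, integralCompSub_map_map hφm measurable_fst hadd,
    integralCompSub_map_map hφm hadd measurable_fst, ← integral_add h₀₀ h₁₁,
    ← integral_add h₀₁ h₁₀]
  refine integral_mono_ae (h₀₀.add h₁₁) (h₀₁.add h₁₀) ?_
  filter_upwards [Measure.quasiMeasurePreserving_fst.ae hP,
    Measure.quasiMeasurePreserving_snd.ae hQ] with ⟨⟨x, u⟩, ⟨y, v⟩⟩ (hu : 0 ≤ u) (hv : 0 ≤ v)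
  have h := hφ.map_add_sub_map_le (show x - (y + v) ≤ x - y by linarith) hu
  rw [show x - (y + v) + u = x + u - (y + v) by ring, show x - y + u = x + u - y by ring] at h
  dsimp only
  linarith

theorem integralCompSub_conv_submodular (hφ : ConvexOn ℝ univ φ)
    {μ ν ρ τ : Measure ℝ} [SFinite μ] [SFinite ν] [IsProbabilityMeasure ρ]
    [IsProbabilityMeasure τ] (hρ : ∀ᵐ u ∂ρ, 0 ≤ u) (hτ : ∀ᵐ v ∂τ, 0 ≤ v)
    (h₀₀ : IntegrableCompSub φ μ ν) (h₀₁ : IntegrableCompSub φ μ (ν ∗ τ))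
    (h₁₀ : IntegrableCompSub φ (μ ∗ ρ) ν) (h₁₁ : IntegrableCompSub φ (μ ∗ ρ) (ν ∗ τ)) :
    integralCompSub φ μ ν + integralCompSub φ (μ ∗ ρ) (ν ∗ τ) ≤
      integralCompSub φ μ (ν ∗ τ) + integralCompSub φ (μ ∗ ρ) ν := by
  have hμ : (μ.prod ρ).map Prod.fst = μ := by simp [Measure.map_fst_prod]
  have hν : (ν.prod τ).map Prod.fst = ν := by simp [Measure.map_fst_prod]
  have h := integralCompSub_map_submodular hφ (P := μ.prod ρ) (Q := ν.prod τ)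
    (Measure.quasiMeasurePreserving_snd.ae hρ) (Measure.quasiMeasurePreserving_snd.ae hτ)
    (by rwa [hμ, hν]) (by rwa [hμ]) (by rwa [hν]) h₁₁
  rwa [hμ, hν] at h

end Submodular

theorem integralCompSub_gammaMeasure_submodular {φ : ℝ → ℝ} (hφ : ConvexOn ℝ univ φ)
    {a b lam mu : ℝ} (ha : 0 < a) (hb : 0 < b) (hlam : 0 < lam) (hmu : 0 < mu)
    (h₀₀ : IntegrableCompSub φ (gammaMeasure a lam) (gammaMeasure b mu))
    (h₀₁ : IntegrableCompSub φ (gammaMeasure a lam) (gammaMeasure (b + 1) mu))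
    (h₁₀ : IntegrableCompSub φ (gammaMeasure (a + 1) lam) (gammaMeasure b mu))
    (h₁₁ : IntegrableCompSub φ (gammaMeasure (a + 1) lam) (gammaMeasure (b + 1) mu)) :
    integralCompSub φ (gammaMeasure a lam) (gammaMeasure b mu) +
        integralCompSub φ (gammaMeasure (a + 1) lam) (gammaMeasure (b + 1) mu) ≤
      integralCompSub φ (gammaMeasure a lam) (gammaMeasure (b + 1) mu) +
        integralCompSub φ (gammaMeasure (a + 1) lam) (gammaMeasure b mu) := by
  have := isProbabilityMeasure_gammaMeasure ha hlam
  have := isProbabilityMeasure_gammaMeasure hb hmu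
  have := isProbabilityMeasure_gammaMeasure one_pos hlam
  have := isProbabilityMeasure_gammaMeasure one_pos hmu
  rw [← gammaMeasure_conv_gammaMeasure_one ha hlam,
    ← gammaMeasure_conv_gammaMeasure_one hb hmu] at h₁₁ ⊢
  exact integralCompSub_conv_submodular hφ (ae_nonneg_gammaMeasure 1 lam)
    (ae_nonneg_gammaMeasure 1 mu) h₀₀ (by rwa [gammaMeasure_conv_gammaMeasure_one hb hmu])
    (by rwa [gammaMeasure_conv_gammaMeasure_one ha hlam]) h₁₁

theorem submodular_rectangle_of_unit_square {f : ℕ → ℕ → ℝ} {a b : ℕ}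
    (hf : ∀ s t, a ≤ s → s < b → a ≤ t → t < b →
      f s t + f (s + 1) (t + 1) ≤ f s (t + 1) + f (s + 1) t)
    {i j m n : ℕ} (hi : a ≤ i) (hij : i ≤ j) (hj : j ≤ b) (hm : a ≤ m) (hmn : m ≤ n) (hn : n ≤ b) :
    f i m + f j n ≤ f i n + f j m := by
  have hrow : ∀ t, a ≤ t → t < b → AntitoneOn (fun s => f s (t + 1) - f s t) (Icc a b) :=
    fun t ht htb => antitoneOn_of_succ_le ordConnected_Icc fun s _ hs hs' => by
      rw [Order.succ_eq_add_one] at hs' ⊢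
      linarith [hf s t hs.1 (by simpa using hs'.2) ht htb]
  have hcol : AntitoneOn (fun t => f j t - f i t) (Icc a b) :=
    antitoneOn_of_succ_le ordConnected_Icc fun t _ ht ht' => by
      rw [Order.succ_eq_add_one] at ht' ⊢
      linarith [hrow t ht.1 (by simpa using ht'.2) ⟨hi, hij.trans hj⟩ ⟨hi.trans hij, hj⟩ hij]
  linarith [hcol ⟨hm, hmn.trans hn⟩ ⟨hm.trans hmn, hn⟩ hmn]

theorem Finset.sum_sum_mul_mul_le_sum_mul {ι : Type*} (s : Finset ι) {w : ι → ℝ}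
    (hw : ∀ i ∈ s, 0 ≤ w i) (hw1 : ∑ i ∈ s, w i = 1) {g : ι → ι → ℝ}
    (hg : ∀ i ∈ s, ∀ j ∈ s, g i j + g j i ≤ g i i + g j j) :
    ∑ i ∈ s, ∑ j ∈ s, w i * w j * g i j ≤ ∑ i ∈ s, w i * g i i := by
  have hswap : ∀ h : ι → ι → ℝ,
      ∑ i ∈ s, ∑ j ∈ s, w i * w j * h j i = ∑ i ∈ s, ∑ j ∈ s, w i * w j * h i j := by
    intro h
    rw [Finset.sum_comm]
    simp only [mul_comm (w _) (w _)]
  have hdiag : ∑ i ∈ s, ∑ j ∈ s, w i * w j * g i i = ∑ i ∈ s, w i * g i i := by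
    refine Finset.sum_congr rfl fun i _ => ?_
    rw [← Finset.sum_mul, ← Finset.mul_sum, hw1, mul_one]
  have hmono : ∑ i ∈ s, ∑ j ∈ s, w i * w j * (g i j + g j i)
      ≤ ∑ i ∈ s, ∑ j ∈ s, w i * w j * (g i i + g j j) :=
    Finset.sum_le_sum fun i hi => Finset.sum_le_sum fun j hj =>
      mul_le_mul_of_nonneg_left (hg i hi j hj) (mul_nonneg (hw i hi) (hw j hj))
  simp only [mul_add, Finset.sum_add_distrib, hswap (fun i j => g i i)] at hmono
  linarith [hswap g]

theorem Finset.sum_sum_mul_mul_le_sum_mul_reflect {f : ℕ → ℕ → ℝ} {K : ℕ}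
    (hf : ∀ s t, 1 ≤ s → s < K → 1 ≤ t → t < K →
      f s t + f (s + 1) (t + 1) ≤ f s (t + 1) + f (s + 1) t)
    {w : ℕ → ℝ} (hw : ∀ i ∈ Icc 1 K, 0 ≤ w i) (hw1 : ∑ i ∈ Icc 1 K, w i = 1)
    (hw_symm : ∀ i ∈ Icc 1 K, w i = w (K + 1 - i)) :
    ∑ i ∈ Icc 1 K, ∑ j ∈ Icc 1 K, w i * w j * f i j ≤ ∑ i ∈ Icc 1 K, w i * f i (K + 1 - i) := by
  have hreflect : ∀ i, ∑ j ∈ Icc 1 K, w i * w j * f i j =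
      ∑ j ∈ Icc 1 K, w i * w j * f i (K + 1 - j) := fun i =>
    Finset.sum_nbij' (fun j => K + 1 - j) (fun j => K + 1 - j)
      (fun j hj => by simp only [Finset.mem_Icc] at hj ⊢; omega)
      (fun j hj => by simp only [Finset.mem_Icc] at hj ⊢; omega)
      (fun j hj => by simp only [Finset.mem_Icc] at hj; omega)
      (fun j hj => by simp only [Finset.mem_Icc] at hj; omega)
      (fun j hj => by
        rw [← hw_symm j hj, Nat.sub_sub_self (by simp only [Finset.mem_Icc] at hj; omega)])
  simp only [hreflect]
  refine Finset.sum_sum_mul_mul_le_sum_mul _ hw hw1 fun i hi j hj => ?_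
  rw [Finset.mem_Icc] at hi hj
  rcases le_total i j with h | h
  · linarith [submodular_rectangle_of_unit_square hf hi.1 h hj.2 (m := K + 1 - j) (n := K + 1 - i)
      (by omega) (by omega) (by omega)]
  · linarith [submodular_rectangle_of_unit_square hf hj.1 h hi.2 (m := K + 1 - i) (n := K + 1 - j)
      (by omega) (by omega) (by omega)]

theorem negatively_correlated_convex_order_general
    (K : ℕ) (pr : ℕ → ℝ)
    (hpr : ∀ i ∈ Finset.Icc 1 K, 0 ≤ pr i)
    (hprsum : ∑ i ∈ Finset.Icc 1 K, pr i = 1)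
    (hprsymm : ∀ i ∈ Finset.Icc 1 K, pr i = pr (K + 1 - i))
    (lam mu : ℝ) (hlam : 0 < lam) (hmu : 0 < mu)
    (φ : ℝ → ℝ) (hconv : ConvexOn ℝ Set.univ φ)
    (hint : ∀ i ∈ Finset.Icc 1 K, ∀ j ∈ Finset.Icc 1 K,
      Integrable (fun p : ℝ × ℝ => φ (p.1 - p.2))
        ((gammaMeasure (i : ℝ) lam).prod (gammaMeasure (j : ℝ) mu))) :
    ∑ i ∈ Finset.Icc 1 K, ∑ j ∈ Finset.Icc 1 K, pr i * pr j *
        ∫ p : ℝ × ℝ, φ (p.1 - p.2) ∂((gammaMeasure (i : ℝ) lam).prod (gammaMeasure (j : ℝ) mu)) ≤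
      ∑ i ∈ Finset.Icc 1 K, pr i *
        ∫ p : ℝ × ℝ, φ (p.1 - p.2)
          ∂((gammaMeasure (i : ℝ) lam).prod (gammaMeasure ((K + 1 - i : ℕ) : ℝ) mu)) := by
  refine Finset.sum_sum_mul_mul_le_sum_mul_reflect
    (f := fun i j : ℕ => integralCompSub φ (gammaMeasure i lam) (gammaMeasure j mu))
    (fun s t hs hsK ht htK => ?_) hpr hprsum hprsymm
  have hint' : ∀ i j : ℕ, 1 ≤ i → i ≤ K → 1 ≤ j → j ≤ K →
      IntegrableCompSub φ (gammaMeasure i lam) (gammaMeasure j mu) :=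
    fun i j hi hiK hj hjK => hint i (Finset.mem_Icc.2 ⟨hi, hiK⟩) j (Finset.mem_Icc.2 ⟨hj, hjK⟩)
  have h₀₁ := hint' s (t + 1) hs hsK.le (by omega) htK
  have h₁₀ := hint' (s + 1) t (by omega) hsK ht htK.le
  have h₁₁ := hint' (s + 1) (t + 1) (by omega) hsK (by omega) htK
  push_cast at h₀₁ h₁₀ h₁₁ ⊢
  exact integralCompSub_gammaMeasure_submodular hconv (by positivity) (by positivity) hlam hmu
    (hint' s t hs hsK.le ht htK.le) h₀₁ h₁₀ h₁₁

/-- Convex-order inequality `D₀ ≼_cx D₋` for a symmetric mixing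
distribution `π`: the `π ⊗ π`-average of `Φ(i,j)` is at most the `π`-average along the
anti-diagonal `Φ(i, K+1-i)`, where
`Φ(i,j) = ∫∫ φ(x - y) dErlang(i,λ)(x) dErlang(j,μ)(y)`. -/
theorem negatively_correlated_convex_order
    (K : ℕ) (hK : 1 ≤ K) (pr : ℕ → ℝ)
    (hpr : ∀ i ∈ Finset.Icc 1 K, 0 ≤ pr i)
    (hprsum : ∑ i ∈ Finset.Icc 1 K, pr i = 1)
    (hprsymm : ∀ i ∈ Finset.Icc 1 K, pr i = pr (K + 1 - i))
    (lam mu : ℝ) (hlam : 0 < lam) (hmu : 0 < mu)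
    (φ : ℝ → ℝ) (hconv : ConvexOn ℝ Set.univ φ)
    (hint : ∀ i ∈ Finset.Icc 1 K, ∀ j ∈ Finset.Icc 1 K,
      Integrable (fun p : ℝ × ℝ => φ (p.1 - p.2))
        ((gammaMeasure (i : ℝ) lam).prod (gammaMeasure (j : ℝ) mu))) :
    ∑ i ∈ Finset.Icc 1 K, ∑ j ∈ Finset.Icc 1 K, pr i * pr j *
        ∫ p : ℝ × ℝ, φ (p.1 - p.2) ∂((gammaMeasure (i : ℝ) lam).prod (gammaMeasure (j : ℝ) mu)) ≤
      ∑ i ∈ Finset.Icc 1 K, pr i *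
        ∫ p : ℝ × ℝ, φ (p.1 - p.2)
          ∂((gammaMeasure (i : ℝ) lam).prod (gammaMeasure ((K + 1 - i : ℕ) : ℝ) mu)) :=
  negatively_correlated_convex_order_general K pr hpr hprsum hprsymm lam mu hlam hmu φ hconv hint
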